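/- Let (X, R) be a Q-polynomial association scheme of class s with Krein parameters a_i* = q_{1,i}^i, b_i* = q_{1,i+1}^i, c_i* = q_{1,i-1}^i and m = m_1. Suppose a_0* = a_1* = ⋯ = a_l* = 0 for some l ≤ s-1. Then for each i with 0 ≤ i ≤ l+1 there exist positive reals f_{i,k} such that the Hadamard power E_1^{∘i} = ∑_{k ≡ i (mod 2), 0 ≤ k ≤ i} f_{i,k} E_k. -/

import Mathlib

open Matrix Finset

/-- The all-ones matrix. -/
def allOnes (X : Type*) : Matrix X X ℝ := Matrix.of fun _ _ => (1 : ℝ)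

section

variable {X : Type*} [Fintype X] [DecidableEq X]

/-- `A 0, …, A s` are the adjacency matrices of a symmetric association scheme of
class `s` on `X`. -/
structure IsAssocScheme (s : ℕ) (A : ℕ → Matrix X X ℝ) : Prop where
  zero_one : ∀ i ≤ s, ∀ x y, A i x y = 0 ∨ A i x y = 1
  nonempty : ∀ i ≤ s, A i ≠ 0
  eq_one : A 0 = 1
  sum_eq : ∑ i ∈ Finset.range (s + 1), A i = allOnes X
  symm : ∀ i ≤ s, (A i)ᵀ = A i
  mul_closed : ∀ i ≤ s, ∀ j ≤ s, ∃ p : ℕ → ℝ,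
    A i * A j = ∑ k ∈ Finset.range (s + 1), p k • A k

/-- `E 0, …, E s` are the primitive idempotents of the scheme, with
`E 0 = |X|⁻¹ J`. -/
structure IsPrimIdem (s : ℕ) (A E : ℕ → Matrix X X ℝ) : Prop where
  symm : ∀ i ≤ s, (E i).IsSymm
  mem_span : ∀ i ≤ s, ∃ q : ℕ → ℝ, E i = ∑ k ∈ Finset.range (s + 1), q k • A k
  orth_idem : ∀ i ≤ s, ∀ j ≤ s, E i * E j = if i = j then E i else 0
  sum_eq : ∑ i ∈ Finset.range (s + 1), E i = 1
  zero_eq : E 0 = (Fintype.card X : ℝ)⁻¹ • allOnes X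

/-- `q` is the family of Krein parameters:
`E i ∘ E j = |X|⁻¹ ∑_k q i j k • E k` (entrywise product). -/
def IsKrein (s : ℕ) (E : ℕ → Matrix X X ℝ) (q : ℕ → ℕ → ℕ → ℝ) : Prop :=
  ∀ i ≤ s, ∀ j ≤ s, Matrix.hadamard (E i) (E j) =
    (Fintype.card X : ℝ)⁻¹ • ∑ k ∈ Finset.range (s + 1), q i j k • E k

/-- The scheme is `Q`-polynomial with respect to the ordering `E 0, …, E s`:
`q 1 j k > 0` for `k = j ± 1` and `q 1 j k = 0` for `|k - j| > 1`. -/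
def IsQPoly (s : ℕ) (q : ℕ → ℕ → ℕ → ℝ) : Prop :=
  (∀ j ≤ s, ∀ k ≤ s, (k = j + 1 ∨ j = k + 1) → 0 < q 1 j k) ∧
  (∀ j ≤ s, ∀ k ≤ s, (j + 1 < k ∨ k + 1 < j) → q 1 j k = 0)

end

/-!
Multiplying an expansion `E 1 ^{∘ i} = ∑ₖ fₖ E k` entrywise by `E 1` and using
`E 1 ∘ E k = |X|⁻¹ ∑ₘ q 1 k m E m` gives an expansion of `E 1 ^{∘ (i+1)}` whose coefficient
of `E m` is `|X|⁻¹ ∑ₖ fₖ q 1 k m`. For `k ≤ l` the Krein number `q 1 k m` vanishes unless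
`m = k ± 1`, where it is positive; so the parity of the support flips, the support grows by
one, and every `E m` with `m ≤ i + 1` of the new parity is reached from `E (m - 1)`, or from
`E 1` when `m = 0`. The induction starts from `E 1 ^{∘ 0} = J = |X| E 0`.
-/

namespace Matrix

variable {m n α ι : Type*}

def hadamardPow [Monoid α] (M : Matrix m n α) (i : ℕ) : Matrix m n α :=
  of fun x y => M x y ^ i

@[simp]
theorem hadamardPow_zero [Monoid α] (M : Matrix m n α) :
    hadamardPow M 0 = of fun _ _ => 1 := by
  ext x y
  simp [hadamardPow]

theorem hadamardPow_succ [CommMonoid α] (M : Matrix m n α) (i : ℕ) :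
    hadamardPow M (i + 1) = M ⊙ hadamardPow M i := by
  ext x y
  simp [hadamardPow, hadamard_apply, pow_succ']

theorem hadamard_sum [NonUnitalNonAssocSemiring α] (M : Matrix m n α) (S : Finset ι)
    (N : ι → Matrix m n α) : M ⊙ ∑ k ∈ S, N k = ∑ k ∈ S, M ⊙ N k := by
  ext x y
  simp [hadamard_apply, sum_apply, Finset.mul_sum]

end Matrix

def parityRange (i : ℕ) : Finset ℕ :=
  (range (i + 1)).filter fun k => k % 2 = i % 2

@[simp]
theorem mem_parityRange {i k : ℕ} : k ∈ parityRange i ↔ k ≤ i ∧ k % 2 = i % 2 := by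
  simp [parityRange]

theorem parityRange_zero : parityRange 0 = {0} := rfl

section

variable {X : Type*} [Fintype X] {s : ℕ} {E : ℕ → Matrix X X ℝ}
  {q : ℕ → ℕ → ℕ → ℝ}

theorem IsPrimIdem.allOnes_eq [DecidableEq X] [Nonempty X] {A : ℕ → Matrix X X ℝ}
    (hE : IsPrimIdem s A E) :
    allOnes X = (Fintype.card X : ℝ) • E 0 := by
  rw [hE.zero_eq, smul_smul, mul_inv_cancel₀ (by positivity), one_smul]

theorem IsKrein.hadamard_sum_smul (hK : IsKrein s E q) {j : ℕ} (hj : j ≤ s) {S : Finset ℕ}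
    (hS : ∀ k ∈ S, k ≤ s) (f : ℕ → ℝ) :
    E j ⊙ ∑ k ∈ S, f k • E k =
      ∑ m ∈ range (s + 1), ((Fintype.card X : ℝ)⁻¹ * ∑ k ∈ S, f k * q j k m) • E m := by
  calc E j ⊙ ∑ k ∈ S, f k • E k
      = ∑ k ∈ S, f k • ((Fintype.card X : ℝ)⁻¹ • ∑ m ∈ range (s + 1), q j k m • E m) := by
        rw [hadamard_sum]
        exact sum_congr rfl fun k hk => by rw [hadamard_smul, hK j hj k (hS k hk)]
    _ = _ := by
        simp only [smul_sum, smul_smul, sum_smul, mul_sum]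
        rw [sum_comm]
        exact sum_congr rfl fun m _ => sum_congr rfl fun k _ => by ring_nf

theorem IsQPoly.krein_eq_zero (hQ : IsQPoly s q) {k m : ℕ} (hk : k ≤ s) (hm : m ≤ s)
    (hdiag : q 1 k k = 0) (hkm : m ≠ k + 1) (hmk : k ≠ m + 1) : q 1 k m = 0 := by
  obtain rfl | hne := eq_or_ne m k
  · exact hdiag
  · exact hQ.2 k hk m hm (by omega)

theorem IsQPoly.krein_nonneg (hQ : IsQPoly s q) {k m : ℕ} (hk : k ≤ s) (hm : m ≤ s)
    (hdiag : q 1 k k = 0) : 0 ≤ q 1 k m := by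
  by_cases h : m = k + 1 ∨ k = m + 1
  · exact (hQ.1 k hk m hm h).le
  · rw [not_or] at h
    exact (hQ.krein_eq_zero hk hm hdiag h.1 h.2).ge

theorem IsQPoly.sum_parityRange_krein_eq_zero (hQ : IsQPoly s q) {i : ℕ}
    (hdiag : ∀ k ≤ i, q 1 k k = 0) (hi : i ≤ s) (f : ℕ → ℝ) {m : ℕ} (hm : m ≤ s)
    (hmi : m ∉ parityRange (i + 1)) : ∑ k ∈ parityRange i, f k * q 1 k m = 0 := by
  refine sum_eq_zero fun k hk => ?_
  rw [mem_parityRange] at hk hmi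
  rw [hQ.krein_eq_zero (hk.1.trans hi) hm (hdiag k hk.1) (by omega) (by omega), mul_zero]

theorem IsQPoly.sum_parityRange_krein_pos (hQ : IsQPoly s q) {i : ℕ}
    (hdiag : ∀ k ≤ i, q 1 k k = 0) (hi : i + 1 ≤ s) {f : ℕ → ℝ}
    (hf : ∀ k ≤ i, k % 2 = i % 2 → 0 < f k) {m : ℕ} (hmi : m ∈ parityRange (i + 1)) :
    0 < ∑ k ∈ parityRange i, f k * q 1 k m := by
  rw [mem_parityRange] at hmi
  have hnonneg : ∀ k ∈ parityRange i, 0 ≤ f k * q 1 k m := fun k hk => by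
    rw [mem_parityRange] at hk
    exact mul_nonneg (hf k hk.1 hk.2).le
      (hQ.krein_nonneg (by omega) (by omega) (hdiag k hk.1))
  obtain ⟨k, hk, hkm⟩ : ∃ k ∈ parityRange i, m = k + 1 ∨ k = m + 1 := by
    rcases Nat.eq_zero_or_pos m with rfl | hm
    · exact ⟨1, mem_parityRange.2 (by omega), Or.inr rfl⟩
    · exact ⟨m - 1, mem_parityRange.2 (by omega), Or.inl (by omega)⟩
  rw [mem_parityRange] at hk
  exact sum_pos' hnonneg ⟨k, mem_parityRange.2 hk,
    mul_pos (hf k hk.1 hk.2) (hQ.1 k (by omega) m (by omega) hkm)⟩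

theorem IsKrein.exists_hadamardPow_succ [Nonempty X] (hK : IsKrein s E q) (hQ : IsQPoly s q)
    (hs : 1 ≤ s) {i : ℕ} (hdiag : ∀ k ≤ i, q 1 k k = 0) (hi : i + 1 ≤ s) {f : ℕ → ℝ}
    (hf : ∀ k ≤ i, k % 2 = i % 2 → 0 < f k)
    (hpow : hadamardPow (E 1) i = ∑ k ∈ parityRange i, f k • E k) :
    ∃ g : ℕ → ℝ, (∀ k ≤ i + 1, k % 2 = (i + 1) % 2 → 0 < g k) ∧
      hadamardPow (E 1) (i + 1) = ∑ k ∈ parityRange (i + 1), g k • E k := by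
  refine ⟨fun m => (Fintype.card X : ℝ)⁻¹ * ∑ k ∈ parityRange i, f k * q 1 k m,
    fun m hm hmi => mul_pos (by positivity)
      (hQ.sum_parityRange_krein_pos hdiag hi hf (mem_parityRange.2 ⟨hm, hmi⟩)), ?_⟩
  rw [hadamardPow_succ, hpow,
    hK.hadamard_sum_smul hs (fun k hk => by have := mem_parityRange.1 hk; omega) f]
  refine (sum_subset (fun m hm => mem_range.2 ?_) fun m hm hmi => ?_).symm
  · have := mem_parityRange.1 hm
    omega
  · rw [hQ.sum_parityRange_krein_eq_zero hdiag (by omega) f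
      (Nat.lt_succ_iff.1 (mem_range.1 hm)) hmi, mul_zero, zero_smul]

end

theorem hadamardPow_E1_parity_general (X : Type*) [Fintype X] [DecidableEq X] (s : ℕ) (hs : 1 ≤ s)
    (A E : ℕ → Matrix X X ℝ) (q : ℕ → ℕ → ℕ → ℝ)
    (hE : IsPrimIdem s A E)
    (hK : IsKrein s E q) (hQ : IsQPoly s q)
    (l : ℕ) (hl : l + 1 ≤ s) (ha : ∀ k ≤ l, q 1 k k = 0) :
    ∀ i ≤ l + 1, ∃ f : ℕ → ℝ,
      (∀ k ≤ i, k % 2 = i % 2 → 0 < f k) ∧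
      (Matrix.of fun x y => (E 1 x y) ^ i) =
        ∑ k ∈ (Finset.range (i + 1)).filter (fun k => k % 2 = i % 2), f k • E k := by
  rcases isEmpty_or_nonempty X with hX | hX
  · exact fun i _ => ⟨fun _ => 1, fun _ _ _ => one_pos, Subsingleton.elim _ _⟩
  intro i hi
  induction i with
  | zero =>
    refine ⟨fun _ => Fintype.card X, fun _ _ _ => by positivity, ?_⟩
    change hadamardPow (E 1) 0 = ∑ k ∈ parityRange 0, _
    rw [hadamardPow_zero, parityRange_zero, sum_singleton, ← hE.allOnes_eq, allOnes]
  | succ i ih =>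
    obtain ⟨f, hf, hpow⟩ := ih (by omega)
    exact hK.exists_hadamardPow_succ hQ hs (fun k hk => ha k (by omega)) (by omega) hf hpow

/-- In a `Q`-polynomial scheme of class `s` with `a*_0 = ⋯ = a*_l = 0` (`l ≤ s - 1`),
for each `0 ≤ i ≤ l + 1` the Hadamard power `E 1 ^{∘ i}` is a positive combination of the
idempotents `E k` with `k ≤ i` and `k ≡ i (mod 2)`. -/
theorem hadamardPow_E1_parity (X : Type*) [Fintype X] [DecidableEq X] (s : ℕ) (hs : 1 ≤ s)
    (A E : ℕ → Matrix X X ℝ) (q : ℕ → ℕ → ℕ → ℝ)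
    (hA : IsAssocScheme s A) (hE : IsPrimIdem s A E)
    (hK : IsKrein s E q) (hQ : IsQPoly s q)
    (l : ℕ) (hl : l + 1 ≤ s) (ha : ∀ k ≤ l, q 1 k k = 0) :
    ∀ i ≤ l + 1, ∃ f : ℕ → ℝ,
      (∀ k ≤ i, k % 2 = i % 2 → 0 < f k) ∧
      (Matrix.of fun x y => (E 1 x y) ^ i) =
        ∑ k ∈ (Finset.range (i + 1)).filter (fun k => k % 2 = i % 2), f k • E k :=
  hadamardPow_E1_parity_general X s hs A E q hE hK hQ l hl ha
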